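/- If the equilibrium x̄ satisfies R + Z(x̄) positive definite and ∇²H(x̄) positive definite, then x̄ is a locally asymptotically stable equilibrium of ẋ = (J−R)∇H(x) + G(x)ū, with the shifted Hamiltonian S serving as a strict Lyapunov function on a ball around x̄. -/

import Mathlib

/-!
The shifted Hamiltonian `S(x) = H(x) - ⟪x - x̄, ∇H(x̄)⟫ - H(x̄)` has gradient
`e(x) = ∇H(x) - ∇H(x̄)`. A positive definite Hessian makes `∇H` strongly monotone near `x̄`, so on a
small ball `S` is positive and `e` vanishes only at `x̄`. Along the vector field, the equilibrium
equation and the skew-symmetry of `J` give `Ṡ = -eᵀ (R + Z(x)) e`, and `R + Z(x)` stays positive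
definite near `x̄` by continuity. So `S` is a strict Lyapunov function on a compact ball: its
sublevel sets trap trajectories (stability), and `Ṡ` is bounded away from zero off any
neighbourhood of `x̄`, which forces `S ∘ γ → 0` and hence `γ → x̄` (attractivity).
-/

open Set Filter Topology Metric Matrix
open scoped RealInnerProductSpace

theorem exists_first_eq_of_continuousOn {f : ℝ → ℝ} {a b c : ℝ} (hab : a ≤ b)
    (hf : ContinuousOn f (Icc a b)) (ha : f a < c) (hb : c ≤ f b) :
    ∃ T ∈ Icc a b, f T = c ∧ ∀ s ∈ Icc a T, f s ≤ c := by
  have hivt {s} (hs : s ∈ Icc a b) (hcs : c ≤ f s) : ∃ s' ∈ Icc a s, f s' = c :=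
    intermediate_value_Icc hs.1 (hf.mono (Icc_subset_Icc_right hs.2)) ⟨ha.le, hcs⟩
  set A := Icc a b ∩ f ⁻¹' {c}
  have hA : IsCompact A := isCompact_Icc.of_isClosed_subset
    (hf.preimage_isClosed_of_isClosed isClosed_Icc isClosed_singleton) inter_subset_left
  obtain ⟨s, hsb, hsc⟩ := hivt (right_mem_Icc.mpr hab) hb
  obtain ⟨T, ⟨hT, hTc⟩, hTmin⟩ := hA.exists_isLeast ⟨s, hsb, hsc⟩
  refine ⟨T, hT, hTc, fun s hs => le_of_not_gt fun hcs => ?_⟩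
  obtain ⟨s', hs', hs'c⟩ := hivt ⟨hs.1, hs.2.trans hT.2⟩ hcs.le
  have : T ≤ s' := hTmin ⟨⟨hs'.1, hs'.2.trans (hs.2.trans hT.2)⟩, hs'c⟩
  have : s = T := le_antisymm hs.2 (this.trans hs'.2)
  subst this
  exact hcs.ne' hTc

section Lyapunov

variable {X : Type*} [MetricSpace X] [ProperSpace X] {S D : X → ℝ} {x₀ : X} {r : ℝ}

theorem lyapunov_stable (hS : Continuous S) (hS₀ : S x₀ = 0)
    (hSpos : ∀ x ∈ closedBall x₀ r, x ≠ x₀ → 0 < S x) (hD : ∀ x ∈ closedBall x₀ r, D x ≤ 0)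
    {ε : ℝ} (hε : 0 < ε) (hεr : ε ≤ r) :
    ∃ δ > 0, ∀ γ : ℝ → X, ContinuousOn γ (Ici 0) →
      (∀ t > 0, HasDerivAt (S ∘ γ) (D (γ t)) t) →
      γ 0 ∈ ball x₀ δ → ∀ t ≥ 0, γ t ∈ ball x₀ ε := by
  obtain ⟨m, hm, hmS⟩ := (isCompact_sphere x₀ ε).exists_forall_le' hS.continuousOn
    fun x hx => hSpos x (sphere_subset_closedBall.trans (closedBall_subset_closedBall hεr) hx)
      (ne_of_mem_sphere hx hε.ne')
  have : ∀ᶠ x in 𝓝 x₀, S x < m := hS.continuousAt.eventually_lt continuousAt_const (hS₀ ▸ hm)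
  obtain ⟨δ, hδ, hδS⟩ := Metric.eventually_nhds_iff_ball.mp this
  refine ⟨min δ ε, lt_min hδ hε, fun γ hγ hSγ hγ₀ t ht => ?_⟩
  -- `S ≥ m` on the sphere but `S < m` on `ball x₀ δ`, while `S ∘ γ` decreases up to the first
  -- time `T` at which `γ` reaches the sphere.
  by_contra hout
  obtain ⟨T, hT, hTε, hbefore⟩ :=
    exists_first_eq_of_continuousOn (f := fun s => dist (γ s) x₀) ht
    ((continuous_id.dist continuous_const).comp_continuousOn (hγ.mono Icc_subset_Ici_self))
    (lt_of_lt_of_le hγ₀ (min_le_right _ _)) (not_lt.mp hout)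
  have hanti : AntitoneOn (S ∘ γ) (Icc 0 T) :=
    antitoneOn_of_hasDerivWithinAt_nonpos (convex_Icc 0 T)
      (hS.comp_continuousOn (hγ.mono Icc_subset_Ici_self))
      (fun s hs => (hSγ s (by rw [interior_Icc] at hs; exact hs.1)).hasDerivWithinAt)
      fun s hs => hD _ <| (closedBall_subset_closedBall hεr)
        (hbefore s (by rw [interior_Icc] at hs; exact Ioo_subset_Icc_self hs))
  have hmT : m ≤ S (γ T) := hmS _ hTε
  have hT0 : S (γ T) ≤ S (γ 0) := hanti ⟨le_rfl, hT.1⟩ ⟨hT.1, le_rfl⟩ hT.1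
  have h0m : S (γ 0) < m := hδS _ (ball_subset_ball (min_le_left _ _) hγ₀)
  linarith

theorem lyapunov_attractive (hr : 0 < r) (hS : Continuous S) (hS₀ : S x₀ = 0)
    (hSpos : ∀ x ∈ closedBall x₀ r, x ≠ x₀ → 0 < S x) (hDc : ContinuousOn D (closedBall x₀ r))
    (hD : ∀ x ∈ closedBall x₀ r, D x ≤ 0) (hDneg : ∀ x ∈ closedBall x₀ r, x ≠ x₀ → D x < 0) :
    ∃ δ > 0, ∀ γ : ℝ → X, ContinuousOn γ (Ici 0) →
      (∀ t > 0, HasDerivAt (S ∘ γ) (D (γ t)) t) →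
      γ 0 ∈ ball x₀ δ → Tendsto γ atTop (𝓝 x₀) := by
  obtain ⟨δ, hδ, hstay⟩ := lyapunov_stable hS hS₀ hSpos hD hr le_rfl
  refine ⟨δ, hδ, fun γ hγ hSγ hγ₀ => ?_⟩
  have hball (t : ℝ) (ht : 0 ≤ t) : γ t ∈ closedBall x₀ r :=
    ball_subset_closedBall (hstay γ hγ hSγ hγ₀ t ht)
  have hanti : AntitoneOn (S ∘ γ) (Ici 0) :=
    antitoneOn_of_hasDerivWithinAt_nonpos (convex_Ici 0) (hS.comp_continuousOn hγ)
      (fun t ht => (hSγ t (by rwa [interior_Ici] at ht)).hasDerivWithinAt)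
      fun t ht => hD _ (hball t (interior_subset ht))
  -- Below any level `c > 0`, the rate `D` is bounded away from zero, so `S ∘ γ` must reach it.
  have hsmall (c : ℝ) (hc : 0 < c) : ∃ t ≥ 0, S (γ t) < c := by
    by_contra! hbig
    have hK : IsCompact (closedBall x₀ r ∩ S ⁻¹' Ici c) :=
      (isCompact_closedBall x₀ r).inter_right (isClosed_Ici.preimage hS)
    obtain ⟨μ, hμ, hDμ⟩ := hK.exists_forall_le' (f := fun x => -D x)
      (hDc.mono inter_subset_left).neg fun x hx => neg_pos.mpr <|
        hDneg x hx.1 (by rintro rfl; exact (hS₀ ▸ hx.2 : c ≤ 0).not_gt hc)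
    have hdecay : AntitoneOn (fun t => S (γ t) + t * μ) (Ici 0) :=
      antitoneOn_of_hasDerivWithinAt_nonpos (f' := fun t => D (γ t) + μ) (convex_Ici 0)
        ((hS.comp_continuousOn hγ).add (continuousOn_id.mul continuousOn_const))
        (fun t ht => by
          rw [interior_Ici] at ht
          exact ((hSγ t ht).add (hasDerivAt_mul_const μ)).hasDerivWithinAt)
        fun t ht => by
          linarith [hDμ _ ⟨hball t (interior_subset ht), hbig t (interior_subset ht)⟩]
    have hT : 0 ≤ S (γ 0) / μ := div_nonneg (hc.le.trans (hbig 0 le_rfl)) hμ.le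
    have h := hdecay self_mem_Ici hT hT
    simp only [add_zero, zero_mul, div_mul_cancel₀ _ hμ.ne'] at h
    linarith [hbig _ hT]
  rw [Metric.tendsto_atTop]
  intro η hη
  have hK : IsCompact (closedBall x₀ r \ ball x₀ η) :=
    (isCompact_closedBall x₀ r).diff isOpen_ball
  obtain ⟨c, hc, hcS⟩ := hK.exists_forall_le' hS.continuousOn
    fun x hx => hSpos x hx.1 (by rintro rfl; exact hx.2 (mem_ball_self hη))
  obtain ⟨t₀, ht₀, hSt₀⟩ := hsmall c hc
  refine ⟨t₀, fun t ht => not_le.mp fun hfar => ?_⟩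
  have hct : c ≤ S (γ t) := hcS (γ t) ⟨hball t (ht₀.trans ht), not_lt.mpr hfar⟩
  have htt₀ : S (γ t) ≤ S (γ t₀) := hanti ht₀ (ht₀.trans ht) ht
  linarith

end Lyapunov

section InnerProductSpace

variable {E : Type*} [NormedAddCommGroup E] [InnerProductSpace ℝ E]

theorem ContinuousLinearMap.exists_pos_mul_norm_sq_le_inner [FiniteDimensional ℝ E]
    (A : E →L[ℝ] E) (hA : ∀ v, v ≠ 0 → 0 < ⟪v, A v⟫) :
    ∃ c > 0, ∀ v, c * ‖v‖ ^ 2 ≤ ⟪v, A v⟫ := by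
  obtain ⟨c, hc, hcA⟩ := (isCompact_sphere (0 : E) 1).exists_forall_le'
    (f := fun v => ⟪v, A v⟫) (by fun_prop) fun v hv => hA v (ne_zero_of_mem_unit_sphere ⟨v, hv⟩)
  refine ⟨c, hc, fun v => ?_⟩
  rcases eq_or_ne v 0 with rfl | hv
  · simp
  have hv' : 0 < ‖v‖ := norm_pos_iff.mpr hv
  have h := hcA (‖v‖⁻¹ • v) (by simp [norm_smul, hv'.ne'])
  simp only [map_smul, inner_smul_left, inner_smul_right, RCLike.conj_to_real] at h
  rwa [← mul_assoc, ← sq, inv_pow, le_inv_mul_iff₀ (by positivity), mul_comm] at h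

theorem ContinuousAt.eventually_mul_norm_sq_le_inner {X : Type*} [TopologicalSpace X]
    {A : X → E →L[ℝ] E} {x₀ : X} (hA : ContinuousAt A x₀) {c : ℝ} (hc : 0 < c)
    (h₀ : ∀ v, c * ‖v‖ ^ 2 ≤ ⟪v, A x₀ v⟫) :
    ∀ᶠ x in 𝓝 x₀, ∀ v, c / 2 * ‖v‖ ^ 2 ≤ ⟪v, A x v⟫ := by
  filter_upwards [hA (ball_mem_nhds _ (half_pos hc))] with x hx v
  rw [mem_preimage, mem_ball, dist_eq_norm] at hx
  have hdiff : |⟪v, (A x - A x₀) v⟫| ≤ c / 2 * ‖v‖ ^ 2 :=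
    calc |⟪v, (A x - A x₀) v⟫| ≤ ‖v‖ * ‖(A x - A x₀) v‖ := abs_real_inner_le_norm _ _
      _ ≤ ‖v‖ * (‖A x - A x₀‖ * ‖v‖) := by gcongr; exact (A x - A x₀).le_opNorm v
      _ ≤ c / 2 * ‖v‖ ^ 2 := by nlinarith [norm_nonneg v]
  rw [_root_.sub_apply, inner_sub_right] at hdiff
  linarith [abs_le.mp hdiff, h₀ v]

theorem ContinuousAt.exists_pos_eventually_mul_norm_sq_le_inner [FiniteDimensional ℝ E]
    {X : Type*} [TopologicalSpace X] {A : X → E →L[ℝ] E} {x₀ : X} (hA : ContinuousAt A x₀)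
    (hpos : ∀ v, v ≠ 0 → 0 < ⟪v, A x₀ v⟫) :
    ∃ c > 0, ∀ᶠ x in 𝓝 x₀, ∀ v, c * ‖v‖ ^ 2 ≤ ⟪v, A x v⟫ := by
  obtain ⟨c, hc, h₀⟩ := (A x₀).exists_pos_mul_norm_sq_le_inner hpos
  exact ⟨c / 2, half_pos hc, hA.eventually_mul_norm_sq_le_inner hc h₀⟩

theorem hasDerivAt_add_smul (y u : E) (t : ℝ) : HasDerivAt (fun t : ℝ => y + t • u) u t := by
  simpa using ((hasDerivAt_id t).smul_const u).const_add y

theorem Convex.mul_norm_sub_sq_le_inner_sub {s : Set E} (hs : Convex ℝ s) {g : E → E}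
    {g' : E → E →L[ℝ] E} (hg : ∀ y ∈ s, HasFDerivAt g (g' y) y) {c : ℝ}
    (hc : ∀ y ∈ s, ∀ v, c * ‖v‖ ^ 2 ≤ ⟪v, g' y v⟫) {x y : E} (hx : x ∈ s) (hy : y ∈ s) :
    c * ‖x - y‖ ^ 2 ≤ ⟪g x - g y, x - y⟫ := by
  set u := x - y
  have hderiv (t : ℝ) (ht : t ∈ Icc (0 : ℝ) 1) :
      HasDerivAt (fun t : ℝ => ⟪g (y + t • u), u⟫ - t * (c * ‖u‖ ^ 2))
        (⟪g' (y + t • u) u, u⟫ - c * ‖u‖ ^ 2) t := by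
    have hgt := (hg _ (hs.add_smul_sub_mem hy hx ht)).comp_hasDerivAt t
      (hasDerivAt_add_smul y u t)
    have h := (hgt.inner ℝ (hasDerivAt_const t u)).sub (hasDerivAt_mul_const (c * ‖u‖ ^ 2))
    rwa [inner_zero_right, zero_add] at h
  have hmono := monotoneOn_of_hasDerivWithinAt_nonneg (convex_Icc 0 1)
    (fun t ht => (hderiv t ht).continuousAt.continuousWithinAt)
    (fun t ht => (hderiv t (interior_subset ht)).hasDerivWithinAt)
    fun t ht => by
      have := hc _ (hs.add_smul_sub_mem hy hx (interior_subset ht)) u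
      rw [real_inner_comm] at this
      linarith
  have h := hmono (left_mem_Icc.mpr zero_le_one) (right_mem_Icc.mpr zero_le_one) zero_le_one
  simp only [zero_smul, add_zero, zero_mul, sub_zero, one_smul, one_mul, u,
    add_sub_cancel] at h
  rw [inner_sub_left]
  linarith

theorem Convex.lt_of_inner_gradient_pos [CompleteSpace E] {s : Set E} (hs : Convex ℝ s)
    {f : E → ℝ} {g : E → E} (hf : ∀ y ∈ s, HasGradientAt f (g y) y) {x₀ x : E}
    (hg : ∀ y ∈ s, y ≠ x₀ → 0 < ⟪g y, y - x₀⟫) (hx₀ : x₀ ∈ s) (hx : x ∈ s) (hne : x ≠ x₀) :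
    f x₀ < f x := by
  set u := x - x₀
  have hderiv (t : ℝ) (ht : t ∈ Icc (0 : ℝ) 1) :
      HasDerivAt (fun t : ℝ => f (x₀ + t • u)) ⟪g (x₀ + t • u), u⟫ t := by
    exact (hf _ (hs.add_smul_sub_mem hx₀ hx ht)).hasFDerivAt.comp_hasDerivAt t
      (hasDerivAt_add_smul x₀ u t)
  have hmono := strictMonoOn_of_hasDerivWithinAt_pos (convex_Icc 0 1)
    (fun t ht => (hderiv t ht).continuousAt.continuousWithinAt)
    (fun t ht => (hderiv t (interior_subset ht)).hasDerivWithinAt)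
    fun t ht => by
      rw [interior_Icc] at ht
      have hu : u ≠ 0 := sub_ne_zero.mpr hne
      have := hg _ (hs.add_smul_sub_mem hx₀ hx (Ioo_subset_Icc_self ht))
        (by simpa [ht.1.ne'] using hu)
      rw [add_sub_cancel_left, inner_smul_right] at this
      exact pos_of_mul_pos_right this ht.1.le
  simpa [u] using hmono (left_mem_Icc.mpr zero_le_one) (right_mem_Icc.mpr zero_le_one) zero_lt_one

theorem ContDiff.gradient_right [CompleteSpace E] {f : E → ℝ} {m n : WithTop ℕ∞}
    (hf : ContDiff ℝ n f) (hmn : m + 1 ≤ n) : ContDiff ℝ m (gradient f) :=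
  (InnerProductSpace.toDual ℝ E).symm.contDiff.comp (hf.fderiv_right hmn)

noncomputable def shiftedHamiltonian [CompleteSpace E] (H : E → ℝ) (x₀ x : E) : ℝ :=
  H x - ⟪x - x₀, gradient H x₀⟫ - H x₀

theorem hasGradientAt_shiftedHamiltonian [CompleteSpace E] {H : E → ℝ} {x : E}
    (hH : DifferentiableAt ℝ H x) (x₀ : E) :
    HasGradientAt (shiftedHamiltonian H x₀) (gradient H x - gradient H x₀) x := by
  have hlin : HasFDerivAt (fun y => ⟪y - x₀, gradient H x₀⟫)
      (InnerProductSpace.toDual ℝ E (gradient H x₀)) x := by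
    have h : (fun y => ⟪y - x₀, gradient H x₀⟫) =
        fun y => InnerProductSpace.toDual ℝ E (gradient H x₀) y - ⟪gradient H x₀, x₀⟫ := by
      ext y
      rw [InnerProductSpace.toDual_apply_apply, inner_sub_left, real_inner_comm y,
        real_inner_comm x₀]
    rw [h]
    exact (InnerProductSpace.toDual ℝ E (gradient H x₀)).hasFDerivAt.sub_const _
  rw [hasGradientAt_iff_hasFDerivAt, map_sub]
  unfold shiftedHamiltonian
  exact (hH.hasGradientAt.hasFDerivAt.sub hlin).sub_const (H x₀)

theorem ContDiff.eventually_shiftedHamiltonian_pos [FiniteDimensional ℝ E] {H : E → ℝ}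
    (hH : ContDiff ℝ 2 H) {x₀ : E}
    (hhess : ∀ v, v ≠ 0 → 0 < ⟪v, fderiv ℝ (gradient H) x₀ v⟫) :
    ∀ᶠ x in 𝓝 x₀, x ≠ x₀ → 0 < shiftedHamiltonian H x₀ x ∧ gradient H x ≠ gradient H x₀ := by
  have hgrad : ContDiff ℝ 1 (gradient H) := hH.gradient_right (by norm_num)
  obtain ⟨c, hc, hev⟩ := (hgrad.continuous_fderiv one_ne_zero).continuousAt
    |>.exists_pos_eventually_mul_norm_sq_le_inner hhess
  obtain ⟨r, hr, hcoer⟩ := eventually_nhds_iff_ball.mp hev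
  have hmono (x : E) (hx : x ∈ ball x₀ r) (hne : x ≠ x₀) :
      0 < ⟪gradient H x - gradient H x₀, x - x₀⟫ := by
    have : 0 < ‖x - x₀‖ := norm_pos_iff.mpr (sub_ne_zero.mpr hne)
    exact (by positivity : 0 < c * ‖x - x₀‖ ^ 2).trans_le <|
      (convex_ball x₀ r).mul_norm_sub_sq_le_inner_sub
        (fun y _ => (hgrad.differentiable one_ne_zero y).hasFDerivAt) hcoer hx (mem_ball_self hr)
  filter_upwards [ball_mem_nhds x₀ hr] with x hx hne
  refine ⟨?_, fun h => by simpa [h] using hmono x hx hne⟩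
  have h := (convex_ball x₀ r).lt_of_inner_gradient_pos
    (fun y _ => hasGradientAt_shiftedHamiltonian (hH.differentiable (by norm_num) y) x₀)
    hmono (mem_ball_self hr) hx hne
  simpa [shiftedHamiltonian] using h

end InnerProductSpace

theorem Matrix.dotProduct_mulVec_self_eq_zero_of_transpose_eq_neg {ι R : Type*} [Fintype ι]
    [CommRing R] [IsAddTorsionFree R] {J : Matrix ι ι R} (hJ : Jᵀ = -J) (v : ι → R) :
    v ⬝ᵥ J *ᵥ v = 0 :=
  self_eq_neg.mp <| by
    conv_lhs => rw [dotProduct_mulVec, ← mulVec_transpose, hJ, neg_mulVec, neg_dotProduct,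
      dotProduct_comm]

section InputMatrix

variable {ι : Type*} [DecidableEq ι]

/-- The input matrix `G(x)` of the system is `inputMatrix I (∇H x)`. -/
noncomputable def inputMatrix (I : Set ι) [DecidablePred (· ∈ I)] (a : ι → ℝ) : Matrix ι ι ℝ :=
  diagonal fun i => if i ∈ I then 0 else (a i)⁻¹

variable {I : Set ι} [DecidablePred (· ∈ I)]

theorem ContinuousAt.inputMatrix {X : Type*} [TopologicalSpace X] {a : X → ι → ℝ} {x : X}
    (ha : ContinuousAt a x) (h0 : ∀ i ∉ I, a x i ≠ 0) :
    ContinuousAt (fun y => inputMatrix I (a y)) x := by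
  have hentries : ContinuousAt (fun y i => if i ∈ I then 0 else (a y i)⁻¹) x :=
    continuousAt_pi.2 fun i => by
      by_cases hi : i ∈ I
      · simpa only [hi, if_true] using continuousAt_const
      · simp only [hi, if_false]
        exact (continuousAt_pi.1 ha i).inv₀ (h0 i hi)
  exact (continuous_id.matrix_diagonal : Continuous fun d : ι → ℝ => diagonal d).continuousAt.comp
    hentries

variable [Fintype ι]

/-- By the equilibrium equation only `(G(a) - G(b)) u` survives besides the skew and dissipative
parts, and `1 / aᵢ - 1 / bᵢ = -(aᵢ - bᵢ) / (bᵢ aᵢ)` turns it into the quadratic form of `Z`. -/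
theorem sub_dotProduct_mulVec_add_inputMatrix {J R : Matrix ι ι ℝ} (hJ : Jᵀ = -J)
    {a b u : ι → ℝ} (ha : ∀ i ∉ I, a i ≠ 0) (hb : ∀ i ∉ I, b i ≠ 0)
    (heq : (J - R) *ᵥ b + inputMatrix I b *ᵥ u = 0) :
    (a - b) ⬝ᵥ ((J - R) *ᵥ a + inputMatrix I a *ᵥ u) =
      -((a - b) ⬝ᵥ (R + inputMatrix I b * diagonal u * inputMatrix I a) *ᵥ (a - b)) := by
  have hinput : (a - b) ⬝ᵥ (inputMatrix I a - inputMatrix I b) *ᵥ u =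
      -((a - b) ⬝ᵥ (inputMatrix I b * diagonal u * inputMatrix I a) *ᵥ (a - b)) := by
    simp only [inputMatrix, diagonal_mul_diagonal, sub_mulVec, mulVec_diagonal, dotProduct,
      ← Finset.sum_neg_distrib, Pi.sub_apply]
    refine Finset.sum_congr rfl fun i _ => ?_
    by_cases hi : i ∈ I
    · simp [hi]
    · simp only [hi, if_false]
      field_simp [ha i hi, hb i hi]
      ring
  have hsplit : (J - R) *ᵥ a + inputMatrix I a *ᵥ u = J *ᵥ (a - b) - R *ᵥ (a - b) +
      (inputMatrix I a - inputMatrix I b) *ᵥ u + ((J - R) *ᵥ b + inputMatrix I b *ᵥ u) := by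
    simp only [sub_mulVec, mulVec_sub]
    abel
  rw [hsplit, heq, add_zero, dotProduct_add, hinput, dotProduct_sub,
    dotProduct_mulVec_self_eq_zero_of_transpose_eq_neg hJ, add_mulVec, dotProduct_add]
  ring

theorem ContinuousAt.eventually_pos_dotProduct_mulVec {X : Type*} [TopologicalSpace X]
    {M : X → Matrix ι ι ℝ} {x₀ : X} (hM : ContinuousAt M x₀) (hpos : (M x₀).PosDef) :
    ∀ᶠ x in 𝓝 x₀, ∀ v, v ≠ 0 → 0 < v ⬝ᵥ M x *ᵥ v := by
  have hA : ContinuousAt (fun x => toEuclideanCLM (𝕜 := ℝ) (M x)) x₀ :=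
    (LinearMap.continuous_of_finiteDimensional
      (toEuclideanCLM (n := ι) (𝕜 := ℝ)).toAlgEquiv.toLinearEquiv.toLinearMap).continuousAt.comp hM
  obtain ⟨c, hc, hev⟩ := hA.exists_pos_eventually_mul_norm_sq_le_inner fun v hv => by
    simpa [inner_toEuclideanCLM] using hpos.dotProduct_mulVec_pos (x := v.ofLp) (by simpa using hv)
  filter_upwards [hev] with x hx v hv
  have h := hx (WithLp.toLp 2 v)
  rw [inner_toEuclideanCLM] at h
  have : 0 < ‖WithLp.toLp 2 v‖ := norm_pos_iff.mpr (by simpa using hv)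
  exact (by positivity : 0 < c * ‖WithLp.toLp 2 v‖ ^ 2).trans_le h

theorem eventually_inner_gradient_sub_neg {J R : Matrix ι ι ℝ} (hJ : Jᵀ = -J)
    {H : EuclideanSpace ℝ ι → ℝ} (hgrad : Continuous (gradient H)) {u : ι → ℝ}
    {x₀ : EuclideanSpace ℝ ι} (hx₀ : ∀ i ∉ I, gradient H x₀ i ≠ 0)
    {F : EuclideanSpace ℝ ι → EuclideanSpace ℝ ι}
    (hF : ∀ x, (F x).ofLp =
      (J - R) *ᵥ (gradient H x).ofLp + inputMatrix I (gradient H x).ofLp *ᵥ u)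
    (heq : F x₀ = 0)
    (hpos : (R + inputMatrix I (gradient H x₀).ofLp * diagonal u *
      inputMatrix I (gradient H x₀).ofLp).PosDef) :
    ∀ᶠ x in 𝓝 x₀, ContinuousAt (fun y => ⟪gradient H y - gradient H x₀, F y⟫) x ∧
      (gradient H x ≠ gradient H x₀ → ⟪gradient H x - gradient H x₀, F x⟫ < 0) := by
  set a : EuclideanSpace ℝ ι → ι → ℝ := fun x => (gradient H x).ofLp
  have ha : Continuous a := (PiLp.continuous_ofLp 2 _).comp hgrad
  set M := fun x => R + inputMatrix I (a x₀) * diagonal u * inputMatrix I (a x)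
  have hM {x} (hx : ∀ i ∉ I, a x i ≠ 0) : ContinuousAt M x :=
    continuousAt_const.add (continuousAt_const.mul (ha.continuousAt.inputMatrix hx))
  have hne : ∀ᶠ x in 𝓝 x₀, ∀ i ∉ I, a x i ≠ 0 := eventually_all.2 fun i => by
    by_cases hi : i ∈ I
    · simp [hi]
    · exact ((continuousAt_pi.1 ha.continuousAt i).eventually_ne (hx₀ i hi)).mono
        fun x hx _ => hx
  obtain ⟨r, hr, hball⟩ :=
    eventually_nhds_iff_ball.mp (hne.and ((hM hx₀).eventually_pos_dotProduct_mulVec hpos))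
  have hrate : ∀ x ∈ ball x₀ r, ⟪gradient H x - gradient H x₀, F x⟫ =
      -((a x - a x₀) ⬝ᵥ M x *ᵥ (a x - a x₀)) := by
    intro x hx
    rw [EuclideanSpace.inner_eq_star_dotProduct, star_trivial, dotProduct_comm, hF,
      WithLp.ofLp_sub]
    exact sub_dotProduct_mulVec_add_inputMatrix hJ (hball x hx).1 hx₀
      (by rw [← hF, heq]; rfl)
  filter_upwards [ball_mem_nhds x₀ hr] with x hx
  refine ⟨?_, fun hne => ?_⟩
  · have hea : ContinuousAt (fun y => a y - a x₀) x := ha.continuousAt.sub continuousAt_const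
    have hquad : Continuous fun p : (ι → ℝ) × Matrix ι ι ℝ => p.1 ⬝ᵥ p.2 *ᵥ p.1 :=
      continuous_fst.dotProduct (continuous_snd.matrix_mulVec continuous_fst)
    exact (hquad.continuousAt.comp (hea.prodMk (hM (hball x hx).1))).neg.congr_of_eventuallyEq
      (eventually_of_mem (isOpen_ball.mem_nhds hx) hrate)
  · rw [hrate x hx, neg_lt_zero]
    refine (hball x hx).2 _ fun h => hne ?_
    ext i
    simpa [sub_eq_zero] using congrFun h i

end InputMatrix

theorem local_asymptotic_stability_general (n : ℕ)
    (J R : Matrix (Fin n) (Fin n) ℝ) (hJ : Jᵀ = -J)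
    (H : EuclideanSpace ℝ (Fin n) → ℝ) (hH : ContDiff ℝ 2 H)
    (I : Set (Fin n)) [DecidablePred (· ∈ I)]
    (ubar : Fin n → ℝ)
    (xbar : EuclideanSpace ℝ (Fin n)) (hxbar : ∀ i ∉ I, 0 < gradient H xbar i)
    (G : EuclideanSpace ℝ (Fin n) → Matrix (Fin n) (Fin n) ℝ)
    (hG : ∀ x, G x = Matrix.diagonal (fun i => if i ∈ I then 0 else (gradient H x i)⁻¹))
    (F : EuclideanSpace ℝ (Fin n) → EuclideanSpace ℝ (Fin n))
    (hF : ∀ x, F x = fun i => ((J - R) *ᵥ (fun j => gradient H x j) + G x *ᵥ ubar) i)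
    (heq : F xbar = 0)
    (hZpos : (R + G xbar * Matrix.diagonal ubar * G xbar).PosDef)
    (hhess : ∀ v : EuclideanSpace ℝ (Fin n), v ≠ 0 →
      0 < (inner ℝ v (fderiv ℝ (gradient H) xbar v) : ℝ)) :
    let S : EuclideanSpace ℝ (Fin n) → ℝ :=
      fun x => H x - (inner ℝ (x - xbar) (gradient H xbar) : ℝ) - H xbar
    -- S is a strict Lyapunov function on a ball around x̄
    (∃ ε > 0, ∀ x ∈ Metric.ball xbar ε, x ≠ xbar →
        0 < S x ∧ (inner ℝ (gradient S x) (F x) : ℝ) < 0) ∧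
    -- Lyapunov stability
    (∀ ε > 0, ∃ δ > 0, ∀ γ : ℝ → EuclideanSpace ℝ (Fin n),
        (∀ t : ℝ, 0 ≤ t → HasDerivAt γ (F (γ t)) t) →
        γ 0 ∈ Metric.ball xbar δ → ∀ t : ℝ, 0 ≤ t → γ t ∈ Metric.ball xbar ε) ∧
    -- local attractivity
    (∃ δ > 0, ∀ γ : ℝ → EuclideanSpace ℝ (Fin n),
        (∀ t : ℝ, 0 ≤ t → HasDerivAt γ (F (γ t)) t) →
        γ 0 ∈ Metric.ball xbar δ →
        Filter.Tendsto γ Filter.atTop (nhds xbar)) := by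
  intro S
  have hSgrad (x) : HasGradientAt S (gradient H x - gradient H xbar) x :=
    hasGradientAt_shiftedHamiltonian (hH.differentiable (by norm_num) x) xbar
  set D := fun x => ⟪gradient H x - gradient H xbar, F x⟫
  obtain ⟨r, hr, hball⟩ := nhds_basis_closedBall.eventually_iff.mp <|
    (hH.eventually_shiftedHamiltonian_pos hhess).and <| eventually_inner_gradient_sub_neg hJ
      (hH.gradient_right (m := 0) (by norm_num)).continuous (fun i hi => (hxbar i hi).ne')
      (fun x => by rw [hF x, hG x]; rfl) heq (by rw [hG] at hZpos; exact hZpos)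
  have hS : Continuous S :=
    continuous_iff_continuousAt.2 fun x => (hSgrad x).differentiableAt.continuousAt
  have hS₀ : S xbar = 0 := by simp [S]
  have hSpos : ∀ x ∈ closedBall xbar r, x ≠ xbar → 0 < S x :=
    fun x hx hne => ((hball hx).1 hne).1
  have hDneg : ∀ x ∈ closedBall xbar r, x ≠ xbar → D x < 0 :=
    fun x hx hne => (hball hx).2.2 ((hball hx).1 hne).2
  have hD : ∀ x ∈ closedBall xbar r, D x ≤ 0 := fun x hx => by
    rcases eq_or_ne x xbar with rfl | hne
    · simp [D]
    · exact (hDneg x hx hne).le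
  have hDc : ContinuousOn D (closedBall xbar r) :=
    continuousOn_of_forall_continuousAt fun x hx => (hball hx).2.1
  have htraj (γ : ℝ → EuclideanSpace ℝ (Fin n)) (hγ : ∀ t : ℝ, 0 ≤ t → HasDerivAt γ (F (γ t)) t) :
      ContinuousOn γ (Ici 0) ∧ ∀ t > 0, HasDerivAt (S ∘ γ) (D (γ t)) t :=
    ⟨fun t ht => (hγ t ht).continuousAt.continuousWithinAt,
      fun t ht => (hSgrad (γ t)).hasFDerivAt.comp_hasDerivAt t (hγ t ht.le)⟩
  refine ⟨⟨r, hr, fun x hx hne => ⟨hSpos x (ball_subset_closedBall hx) hne, ?_⟩⟩,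
    fun ε hε => ?_, ?_⟩
  · rw [(hSgrad x).gradient]
    exact hDneg x (ball_subset_closedBall hx) hne
  · obtain ⟨δ, hδ, hstay⟩ := lyapunov_stable hS hS₀ hSpos hD (lt_min hε hr) (min_le_right ε r)
    exact ⟨δ, hδ, fun γ hγ hγ₀ t ht =>
      ball_subset_ball (min_le_left ε r) (hstay γ (htraj γ hγ).1 (htraj γ hγ).2 hγ₀ t ht)⟩
  · obtain ⟨δ, hδ, hatt⟩ := lyapunov_attractive hr hS hS₀ hSpos hDc hD hDneg
    exact ⟨δ, hδ, fun γ hγ hγ₀ => hatt γ (htraj γ hγ).1 (htraj γ hγ).2 hγ₀⟩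

/-- Local asymptotic stability.  Consider `ẋ = F(x) = (J−R)∇H(x) + G(x)ū` with constant
input `ū`, `J` skew-symmetric, `R ⪰ 0`, `G(x)` diagonal with entries `1/(∇H(x))ᵢ` for
`i ∉ I` (`I` the zero-input indices) and `0` otherwise, and equilibrium `x̄` (`F(x̄) = 0`).
If `R + Z(x̄) > 0` (with `Z(x) = G(x̄) diag(ū) G(x)`) and the Hessian `∇²H(x̄) > 0`, then
the shifted Hamiltonian `S` is a strict Lyapunov function on a ball around `x̄` and `x̄` is
locally asymptotically stable (Lyapunov stability plus local attractivity of solutions). -/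
theorem local_asymptotic_stability (n : ℕ)
    (J R : Matrix (Fin n) (Fin n) ℝ) (hJ : Jᵀ = -J) (hR : R.PosSemidef)
    (H : EuclideanSpace ℝ (Fin n) → ℝ) (hH : ContDiff ℝ 2 H)
    (I : Set (Fin n)) [DecidablePred (· ∈ I)]
    (ubar : Fin n → ℝ) (hu : ∀ i, i ∈ I ↔ ubar i = 0)
    (xbar : EuclideanSpace ℝ (Fin n)) (hxbar : ∀ i ∉ I, 0 < gradient H xbar i)
    (G : EuclideanSpace ℝ (Fin n) → Matrix (Fin n) (Fin n) ℝ)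
    (hG : ∀ x, G x = Matrix.diagonal (fun i => if i ∈ I then 0 else (gradient H x i)⁻¹))
    (F : EuclideanSpace ℝ (Fin n) → EuclideanSpace ℝ (Fin n))
    (hF : ∀ x, F x = fun i => ((J - R) *ᵥ (fun j => gradient H x j) + G x *ᵥ ubar) i)
    (heq : F xbar = 0)
    (hZpos : (R + G xbar * Matrix.diagonal ubar * G xbar).PosDef)
    (hhess : ∀ v : EuclideanSpace ℝ (Fin n), v ≠ 0 →
      0 < (inner ℝ v (fderiv ℝ (gradient H) xbar v) : ℝ)) :
    let S : EuclideanSpace ℝ (Fin n) → ℝ :=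
      fun x => H x - (inner ℝ (x - xbar) (gradient H xbar) : ℝ) - H xbar
    -- S is a strict Lyapunov function on a ball around x̄
    (∃ ε > 0, ∀ x ∈ Metric.ball xbar ε, x ≠ xbar →
        0 < S x ∧ (inner ℝ (gradient S x) (F x) : ℝ) < 0) ∧
    -- Lyapunov stability
    (∀ ε > 0, ∃ δ > 0, ∀ γ : ℝ → EuclideanSpace ℝ (Fin n),
        (∀ t : ℝ, 0 ≤ t → HasDerivAt γ (F (γ t)) t) →
        γ 0 ∈ Metric.ball xbar δ → ∀ t : ℝ, 0 ≤ t → γ t ∈ Metric.ball xbar ε) ∧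
    -- local attractivity
    (∃ δ > 0, ∀ γ : ℝ → EuclideanSpace ℝ (Fin n),
        (∀ t : ℝ, 0 ≤ t → HasDerivAt γ (F (γ t)) t) →
        γ 0 ∈ Metric.ball xbar δ →
        Filter.Tendsto γ Filter.atTop (nhds xbar)) :=
  local_asymptotic_stability_general n J R hJ H hH I ubar xbar hxbar G hG F hF heq hZpos hhess
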